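/- The function g satisfies lim_{η→∞} g(η) = 0 and lim_{η↓0} g(η) = sup_{t≥0} φ(t) (the latter limit taken in [0,∞]). -/

import Mathlib

/-!
With the single codeword `0` and `N = 1`, `g(η) ≤ E φ(η^{-1/d} ‖U‖)`, which is at most `sup φ` and
tends to `0` as `η → ∞`. Conversely, since the norm dominates a multiple of the sup norm, the
points within distance `r` of a codebook `C` form a set of volume at most `κ |C| r^d`, so for `|C| ≤ N` and the scale `s = (N/η)^{1/d}` the event
`s · d(U,C) < t` has probability at most `κ η t^d`. Hence `g(η) ≥ φ(t) (1 - κ η t^d)` for every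
`t ≥ 0`, and letting `η ↓ 0` gives `liminf g ≥ φ(t)`.
-/

open MeasureTheory Filter Set
open scoped ENNReal NNReal

noncomputable section

abbrev Rd (d : ℕ) := Fin d → ℝ

/-- `nrm` is a norm on `ℝ^d`. -/
def IsNorm {d : ℕ} (nrm : Rd d → ℝ) : Prop :=
  (∀ x, 0 ≤ nrm x) ∧ (∀ x, nrm x = 0 ↔ x = 0) ∧
  (∀ (c : ℝ) (x : Rd d), nrm (c • x) = |c| * nrm x) ∧
  (∀ x y, nrm (x + y) ≤ nrm x + nrm y)

/-- The standing assumptions on `φ`: increasing, nonnegative, left continuous,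
`lim_{t↓0} φ(t) = 0`, and not identically zero on `[0,∞)`. -/
def PhiOK (φ : ℝ → ℝ) : Prop :=
  MonotoneOn φ (Ici 0) ∧ (∀ t, 0 ≤ t → 0 ≤ φ t) ∧
  (∀ t, 0 < t → Tendsto φ (nhdsWithin t (Iio t)) (nhds (φ t))) ∧
  Tendsto φ (nhdsWithin 0 (Ioi 0)) (nhds 0) ∧
  (∃ t, 0 ≤ t ∧ φ t ≠ 0)

/-- distance from a point to a set, `d(x,A) = inf_{y ∈ A} ‖x - y‖`. -/
def dSet {d : ℕ} (nrm : Rd d → ℝ) (x : Rd d) (A : Set (Rd d)) : ℝ :=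
  sInf ((fun y => nrm (x - y)) '' A)

/-- the unit cube `[0,1)^d`. -/
def unitCube (d : ℕ) : Set (Rd d) := univ.pi fun _ => Ico (0:ℝ) 1

/-- `f_N(η) = inf_C E[φ((N/η)^{1/d} d(U,C))]`, infimum over nonempty codebooks of at most
`⌊N⌋` points, `U` uniform on `[0,1)^d`; it is `∞` for `N < 1` (empty infimum). -/
def fNq {d : ℕ} (nrm : Rd d → ℝ) (φ : ℝ → ℝ) (N η : ℝ) : ℝ≥0∞ :=
  ⨅ (C : Finset (Rd d)) (_ : C.Nonempty) (_ : (C.card : ℝ) ≤ N),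
    ∫⁻ x in unitCube d, ENNReal.ofReal (φ ((N / η) ^ (1 / (d:ℝ)) * dSet nrm x (C : Set (Rd d)))) ∂volume

/-- `g(η) = inf_{N ≥ 1} f_N(η)` for `η > 0`, extended by `g(0) = lim_{η↓0} g(η) = sup_{η>0} g(η)`
for `η ≤ 0`. -/
def gq {d : ℕ} (nrm : Rd d → ℝ) (φ : ℝ → ℝ) (η : ℝ) : ℝ≥0∞ :=
  if 0 < η then ⨅ N ∈ Ici (1:ℝ), fNq nrm φ N η
  else ⨆ η' ∈ Ioi (0:ℝ), ⨅ N ∈ Ici (1:ℝ), fNq nrm φ N η'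

/-- the absolutely continuous part `μ_c` of `μ` with respect to Lebesgue measure. -/
def muc {d : ℕ} (μ : Measure (Rd d)) : Measure (Rd d) :=
  volume.withDensity (μ.rnDeriv volume)

/-- Orlicz norm `‖F(X)‖_φ = inf{t > 0 : E[φ(F(X)/t)] ≤ 1}` (as the `sInf` in `ℝ≥0∞`,
so it is `∞` when no such `t` exists), where `X` has law `μ`. -/
def orliczN {d : ℕ} (φ : ℝ → ℝ) (μ : Measure (Rd d)) (F : Rd d → ℝ) : ℝ≥0∞ :=
  sInf {s : ℝ≥0∞ | ∃ t : ℝ, 0 < t ∧ s = ENNReal.ofReal t ∧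
    ∫⁻ x, ENNReal.ofReal (φ (F x / t)) ∂μ ≤ 1}

/-- the quantization error `δ(N|X,φ)`, where `X` has law `μ`. -/
def quantErr {d : ℕ} (nrm : Rd d → ℝ) (φ : ℝ → ℝ) (μ : Measure (Rd d)) (N : ℝ) : ℝ≥0∞ :=
  ⨅ (C : Finset (Rd d)) (_ : C.Nonempty) (_ : (C.card : ℝ) ≤ N),
    orliczN φ μ (fun x => dSet nrm x (C : Set (Rd d)))

/-- `I`, the value of the point allocation problem. -/
def pav {d : ℕ} (nrm : Rd d → ℝ) (φ : ℝ → ℝ) (μ : Measure (Rd d)) : ℝ≥0∞ :=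
  ⨅ (ξ : Rd d → ℝ) (_ : ∀ x, 0 ≤ ξ x) (_ : Integrable ξ volume)
    (_ : ∫⁻ x, gq nrm φ (ξ x) ∂(muc μ) ≤ 1),
    ENNReal.ofReal (∫ x, ξ x)

/-- `ḡ(a) = inf_{η>0} [g(η) + aη]`. -/
def gbarq {d : ℕ} (nrm : Rd d → ℝ) (φ : ℝ → ℝ) (a : ℝ≥0∞) : ℝ≥0∞ :=
  ⨅ η ∈ Ioi (0:ℝ), (gq nrm φ η + a * ENNReal.ofReal η)

open Topology

namespace IsNorm

variable {d : ℕ} {nrm : Rd d → ℝ}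

lemma map_zero (h : IsNorm nrm) : nrm 0 = 0 := (h.2.1 0).2 rfl

lemma le_add_sub (h : IsNorm nrm) (x y : Rd d) : nrm x ≤ nrm y + nrm (x - y) := by
  simpa using h.2.2.2 y (x - y)

lemma exists_le_mul_norm (h : IsNorm nrm) : ∃ K, 0 < K ∧ ∀ x, nrm x ≤ K * ‖x‖ := by
  refine ⟨∑ i, nrm (Pi.single i 1) + 1,
    add_pos_of_nonneg_of_pos (Finset.sum_nonneg fun i _ => h.1 _) one_pos, fun x => ?_⟩
  calc nrm x = nrm (∑ i, x i • Pi.single i 1) := by rw [← pi_eq_sum_univ' x]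
    _ ≤ ∑ i, nrm (x i • Pi.single i 1) :=
        Finset.le_sum_of_subadditive nrm h.map_zero.le h.2.2.2 _ _
    _ = ∑ i, |x i| * nrm (Pi.single i 1) := by simp_rw [h.2.2.1]
    _ ≤ ∑ i, ‖x‖ * nrm (Pi.single i 1) := by
        gcongr with i
        · exact h.1 _
        · simpa using norm_le_pi_norm x i
    _ ≤ (∑ i, nrm (Pi.single i 1) + 1) * ‖x‖ := by
        rw [← Finset.mul_sum, mul_comm]; gcongr; linarith

lemma continuous (h : IsNorm nrm) : Continuous nrm := by
  obtain ⟨K, -, hK⟩ := h.exists_le_mul_norm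
  refine (LipschitzWith.of_le_add_mul' K fun x y => ?_).continuous
  simpa [dist_eq_norm] using (h.le_add_sub x y).trans (by gcongr; exact hK (x - y))

lemma exists_pos_mul_norm_le (h : IsNorm nrm) : ∃ c, 0 < c ∧ ∀ x, c * ‖x‖ ≤ nrm x := by
  have unit_mem : ∀ x : Rd d, x ≠ 0 → ‖x‖⁻¹ • x ∈ Metric.sphere (0 : Rd d) 1 := fun x hx => by
    simp [norm_smul, norm_ne_zero_iff.2 hx]
  by_cases hne : (Metric.sphere (0 : Rd d) 1).Nonempty
  · obtain ⟨z, hz, hzmin⟩ :=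
      (isCompact_sphere (0 : Rd d) 1).exists_isMinOn hne h.continuous.continuousOn
    have hz0 : z ≠ 0 := by rintro rfl; simp at hz
    refine ⟨nrm z, (h.1 z).lt_of_ne fun h0 => hz0 ((h.2.1 z).1 h0.symm), fun x => ?_⟩
    rcases eq_or_ne x 0 with rfl | hx
    · simp [h.map_zero]
    have hxn : 0 < ‖x‖ := norm_pos_iff.2 hx
    have hmin : nrm z ≤ ‖x‖⁻¹ * nrm x := by
      simpa [h.2.2.1, abs_of_pos hxn] using hzmin (unit_mem x hx)
    calc nrm z * ‖x‖ ≤ ‖x‖⁻¹ * nrm x * ‖x‖ := by gcongr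
      _ = nrm x := by field_simp
  · refine ⟨1, one_pos, fun x => ?_⟩
    obtain rfl : x = 0 := by_contra fun hx => hne ⟨_, unit_mem x hx⟩
    simp [h.map_zero]

end IsNorm

section dSet

variable {d : ℕ} {nrm : Rd d → ℝ}

lemma dSet_nonneg (h : IsNorm nrm) (x : Rd d) (A : Set (Rd d)) : 0 ≤ dSet nrm x A :=
  Real.sInf_nonneg <| by rintro _ ⟨y, -, rfl⟩; exact h.1 _

lemma dSet_singleton (x y : Rd d) : dSet nrm x {y} = nrm (x - y) := by
  simp [dSet]

lemma dSet_eq_inf' {C : Finset (Rd d)} (hC : C.Nonempty) (x : Rd d) :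
    dSet nrm x C = C.inf' hC fun y => nrm (x - y) :=
  (C.inf'_eq_csInf_image hC _).symm

lemma continuous_dSet (h : IsNorm nrm) {C : Finset (Rd d)} (hC : C.Nonempty) :
    Continuous fun x => dSet nrm x C := by
  simp_rw [dSet_eq_inf' hC]
  exact Continuous.finset_inf'_apply hC fun y _ => h.continuous.comp (continuous_sub_right y)

lemma exists_mem_dSet_eq {C : Finset (Rd d)} (hC : C.Nonempty) (x : Rd d) :
    ∃ y ∈ C, dSet nrm x C = nrm (x - y) := by
  rw [dSet_eq_inf' hC]
  exact C.exists_mem_eq_inf' hC _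

end dSet

section unitCube

variable {d : ℕ}

lemma measurableSet_unitCube : MeasurableSet (unitCube d) :=
  MeasurableSet.univ_pi fun _ => measurableSet_Ico

lemma volume_unitCube : volume (unitCube d) = 1 := by
  simp [unitCube, volume_pi_pi]

lemma norm_le_one_of_mem_unitCube {x : Rd d} (hx : x ∈ unitCube d) : ‖x‖ ≤ 1 :=
  (pi_norm_le_iff_of_nonneg zero_le_one).2 fun i => by
    obtain ⟨h0, h1⟩ := hx i (mem_univ i)
    rw [Real.norm_eq_abs, abs_of_nonneg h0]
    exact h1.le

end unitCube

section gq

variable {d : ℕ} {nrm : Rd d → ℝ} {φ : ℝ → ℝ}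

lemma IsNorm.exists_volume_dSet_le (h : IsNorm nrm) :
    ∃ κ, 0 ≤ κ ∧ ∀ C : Finset (Rd d), C.Nonempty → ∀ r, 0 ≤ r →
      volume {x | dSet nrm x C ≤ r} ≤ ENNReal.ofReal (C.card * κ * r ^ d) := by
  obtain ⟨c, hc, hcx⟩ := h.exists_pos_mul_norm_le
  set B := volume (Metric.ball (0 : Rd d) 1)
  refine ⟨B.toReal / c ^ d, by positivity, fun C hC r hr => ?_⟩
  have hsub : {x | dSet nrm x C ≤ r} ⊆ ⋃ y ∈ C, Metric.closedBall y (r / c) := by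
    intro x hx
    obtain ⟨y, hyC, hy⟩ := exists_mem_dSet_eq (nrm := nrm) hC x
    refine mem_iUnion₂.2 ⟨y, hyC, ?_⟩
    rw [Metric.mem_closedBall, dist_eq_norm, le_div_iff₀ hc, mul_comm]
    exact (hcx _).trans (hy.symm.trans_le hx)
  calc volume {x | dSet nrm x C ≤ r}
      ≤ ∑ y ∈ C, volume (Metric.closedBall y (r / c)) :=
        (measure_mono hsub).trans (measure_biUnion_finset_le C _)
    _ = C.card * (ENNReal.ofReal ((r / c) ^ d) * B) := by
        simp [Measure.addHaar_closedBall _ _ (div_nonneg hr hc.le), B]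
    _ = ENNReal.ofReal (C.card * (B.toReal / c ^ d) * r ^ d) := by
        have hB : B = ENNReal.ofReal B.toReal :=
          (ENNReal.ofReal_toReal measure_ball_lt_top.ne).symm
        conv_lhs => rw [hB, ← ENNReal.ofReal_natCast, ← ENNReal.ofReal_mul (by positivity),
          ← ENNReal.ofReal_mul (by positivity)]
        rw [div_pow]
        congr 1
        field_simp

lemma ofReal_mul_sub_volume_le_setLIntegral (h : IsNorm nrm) (hmono : MonotoneOn φ (Ici 0))
    {C : Finset (Rd d)} (hC : C.Nonempty) {s t : ℝ} (hs : 0 < s) (ht : 0 ≤ t) :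
    ENNReal.ofReal (φ t) * (1 - volume {x | dSet nrm x C ≤ t / s}) ≤
      ∫⁻ x in unitCube d, ENNReal.ofReal (φ (s * dSet nrm x C)) := by
  set S := unitCube d ∩ {x | t / s ≤ dSet nrm x C}
  have hS : MeasurableSet S :=
    measurableSet_unitCube.inter (isClosed_le continuous_const (continuous_dSet h hC)).measurableSet
  have hvol : 1 - volume {x | dSet nrm x C ≤ t / s} ≤ volume S := by
    rw [tsub_le_iff_right, ← volume_unitCube]
    refine (measure_mono fun x hx => ?_).trans (measure_union_le _ _)
    exact (le_total (t / s) (dSet nrm x C)).imp (fun h' => ⟨hx, h'⟩) id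
  have hφS : ∀ x ∈ S, ENNReal.ofReal (φ t) ≤ ENNReal.ofReal (φ (s * dSet nrm x C)) :=
    fun x hx => ENNReal.ofReal_le_ofReal <| hmono ht
      (mul_nonneg hs.le (dSet_nonneg h x C)) ((div_le_iff₀' hs).1 hx.2)
  calc ENNReal.ofReal (φ t) * (1 - volume {x | dSet nrm x C ≤ t / s})
      ≤ ∫⁻ _ in S, ENNReal.ofReal (φ t) := by
        rw [setLIntegral_const]; gcongr
    _ ≤ ∫⁻ x in S, ENNReal.ofReal (φ (s * dSet nrm x C)) :=
        setLIntegral_mono' hS hφS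
    _ ≤ ∫⁻ x in unitCube d, ENNReal.ofReal (φ (s * dSet nrm x C)) :=
        lintegral_mono_set inter_subset_left

lemma ofReal_mul_le_gq (hd : 0 < d) (h : IsNorm nrm) (hmono : MonotoneOn φ (Ici 0))
    {κ : ℝ} (hκ : 0 ≤ κ) (hvol : ∀ C : Finset (Rd d), C.Nonempty → ∀ r, 0 ≤ r →
      volume {x | dSet nrm x C ≤ r} ≤ ENNReal.ofReal (C.card * κ * r ^ d))
    {t η : ℝ} (ht : 0 ≤ t) (hφt : 0 ≤ φ t) (hη : 0 < η) :
    ENNReal.ofReal (φ t * (1 - κ * η * t ^ d)) ≤ gq nrm φ η := by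
  rw [gq, if_pos hη]
  refine le_iInf₂ fun N hN => le_iInf fun C => le_iInf fun hC => le_iInf fun hCN => ?_
  have hN : 0 < N := zero_lt_one.trans_le hN
  set s := (N / η) ^ (1 / (d : ℝ))
  have hs : 0 < s := by positivity
  have hsd : s ^ d = N / η := by
    rw [← Real.rpow_natCast, ← Real.rpow_mul (by positivity), one_div,
      inv_mul_cancel₀ (by positivity), Real.rpow_one]
  have hball : volume {x | dSet nrm x C ≤ t / s} ≤ ENNReal.ofReal (κ * η * t ^ d) := by
    refine (hvol C hC _ (by positivity)).trans (ENNReal.ofReal_le_ofReal ?_)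
    rw [div_pow, hsd]
    calc C.card * κ * (t ^ d / (N / η)) ≤ N * κ * (t ^ d / (N / η)) := by gcongr
      _ = κ * η * t ^ d := by field_simp
  calc ENNReal.ofReal (φ t * (1 - κ * η * t ^ d))
      = ENNReal.ofReal (φ t) * (1 - ENNReal.ofReal (κ * η * t ^ d)) := by
        rw [ENNReal.ofReal_mul hφt, ENNReal.ofReal_sub _ (by positivity), ENNReal.ofReal_one]
    _ ≤ ENNReal.ofReal (φ t) * (1 - volume {x | dSet nrm x C ≤ t / s}) := by gcongr
    _ ≤ _ := ofReal_mul_sub_volume_le_setLIntegral h hmono hC hs ht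

lemma gq_le_setLIntegral {η : ℝ} (hη : 0 < η) :
    gq nrm φ η ≤ ∫⁻ x in unitCube d, ENNReal.ofReal (φ ((1 / η) ^ (1 / (d : ℝ)) * nrm x)) := by
  rw [gq, if_pos hη]
  refine (iInf₂_le 1 (mem_Ici.2 le_rfl)).trans ?_
  refine (iInf_le _ {0}).trans <| (iInf_le _ (Finset.singleton_nonempty 0)).trans <|
    (iInf_le _ (by simp)).trans (le_of_eq ?_)
  simp [dSet_singleton]

lemma gq_le_iSup (h : IsNorm nrm) {η : ℝ} (hη : 0 < η) :
    gq nrm φ η ≤ ⨆ t ∈ Ici (0 : ℝ), ENNReal.ofReal (φ t) := by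
  refine (gq_le_setLIntegral hη).trans ?_
  calc _ ≤ ∫⁻ _ in unitCube d, ⨆ t ∈ Ici (0 : ℝ), ENNReal.ofReal (φ t) :=
        lintegral_mono fun x => le_iSup₂_of_le (f := fun t (_ : t ∈ Ici (0 : ℝ)) =>
          ENNReal.ofReal (φ t)) _ (mul_nonneg (by positivity) (h.1 x)) le_rfl
    _ = _ := by rw [setLIntegral_const, volume_unitCube, mul_one]

lemma gq_le_ofReal (h : IsNorm nrm) (hmono : MonotoneOn φ (Ici 0)) {K : ℝ} (hK : 0 ≤ K)
    (hnrmK : ∀ x, nrm x ≤ K * ‖x‖) {η : ℝ} (hη : 0 < η) :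
    gq nrm φ η ≤ ENNReal.ofReal (φ ((1 / η) ^ (1 / (d : ℝ)) * K)) := by
  refine (gq_le_setLIntegral hη).trans ?_
  have hs : 0 ≤ (1 / η) ^ (1 / (d : ℝ)) := by positivity
  calc _ ≤ ∫⁻ _ in unitCube d, ENNReal.ofReal (φ ((1 / η) ^ (1 / (d : ℝ)) * K)) := by
        refine setLIntegral_mono' measurableSet_unitCube fun x hx => ?_
        refine ENNReal.ofReal_le_ofReal (hmono (mul_nonneg hs (h.1 x)) (mul_nonneg hs hK) ?_)
        gcongr
        calc nrm x ≤ K * ‖x‖ := hnrmK x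
          _ ≤ K := mul_le_of_le_one_right hK (norm_le_one_of_mem_unitCube hx)
    _ = _ := by rw [setLIntegral_const, volume_unitCube, mul_one]

lemma tendsto_gq_atTop (hd : 0 < d) (h : IsNorm nrm) (hmono : MonotoneOn φ (Ici 0))
    (hzero : Tendsto φ (𝓝[>] 0) (𝓝 0)) : Tendsto (gq nrm φ) atTop (𝓝 0) := by
  obtain ⟨K, hK, hnrmK⟩ := h.exists_le_mul_norm
  have hscale : Tendsto (fun η : ℝ => (1 / η) ^ (1 / (d : ℝ)) * K) atTop (𝓝[>] 0) := by
    have hpow : Tendsto (fun η : ℝ => (1 / η) ^ (1 / (d : ℝ))) atTop (𝓝 0) := by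
      refine (tendsto_rpow_neg_atTop (by positivity : (0 : ℝ) < 1 / d)).congr' ?_
      filter_upwards [eventually_gt_atTop 0] with η hη
      rw [Real.rpow_neg hη.le, one_div η, Real.inv_rpow hη.le]
    refine tendsto_nhdsWithin_iff.2 ⟨by simpa using hpow.mul_const K, ?_⟩
    filter_upwards [eventually_gt_atTop 0] with η hη
    exact mem_Ioi.2 (by positivity)
  have hφ := ENNReal.tendsto_ofReal (hzero.comp hscale)
  rw [ENNReal.ofReal_zero] at hφ
  refine tendsto_of_tendsto_of_tendsto_of_le_of_le' tendsto_const_nhds hφ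
    (Eventually.of_forall fun _ => zero_le) ?_
  filter_upwards [eventually_gt_atTop 0] with η hη
  exact gq_le_ofReal h hmono hK.le hnrmK hη

lemma tendsto_gq_nhdsGT_zero (hd : 0 < d) (h : IsNorm nrm) (hmono : MonotoneOn φ (Ici 0))
    (hnonneg : ∀ t, 0 ≤ t → 0 ≤ φ t) :
    Tendsto (gq nrm φ) (𝓝[>] 0) (𝓝 (⨆ t ∈ Ici (0 : ℝ), ENNReal.ofReal (φ t))) := by
  obtain ⟨κ, hκ, hvol⟩ := h.exists_volume_dSet_le
  refine tendsto_order.2 ⟨fun a ha => ?_, fun b hb => ?_⟩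
  · obtain ⟨t, ht⟩ := lt_iSup_iff.1 ha
    obtain ⟨ht, hat⟩ := lt_iSup_iff.1 ht
    have hlim : Tendsto (fun η => ENNReal.ofReal (φ t * (1 - κ * η * t ^ d))) (𝓝[>] 0)
        (𝓝 (ENNReal.ofReal (φ t))) := by
      refine ENNReal.tendsto_ofReal (tendsto_nhdsWithin_of_tendsto_nhds ?_)
      have hcont : Continuous fun η : ℝ => φ t * (1 - κ * η * t ^ d) := by fun_prop
      simpa using hcont.tendsto 0
    filter_upwards [hlim.eventually_const_lt hat, self_mem_nhdsWithin] with η hη hη0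
    exact hη.trans_le (ofReal_mul_le_gq hd h hmono hκ hvol ht (hnonneg t ht) hη0)
  · filter_upwards [self_mem_nhdsWithin] with η hη
    exact (gq_le_iSup h hη).trans_lt hb

end gq

/-- `lim_{η→∞} g(η) = 0` and `lim_{η↓0} g(η) = sup_{t ≥ 0} φ(t)` (in `[0,∞]`). -/
theorem statement5 {d : ℕ} (hd : 0 < d)
    (nrm : Rd d → ℝ) (hnrm : IsNorm nrm) (φ : ℝ → ℝ) (hφ : PhiOK φ) :
    Tendsto (gq nrm φ) atTop (nhds 0) ∧
    Tendsto (gq nrm φ) (nhdsWithin 0 (Ioi 0))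
      (nhds (⨆ t ∈ Ici (0:ℝ), ENNReal.ofReal (φ t))) := by
  obtain ⟨hmono, hnonneg, -, hzero, -⟩ := hφ
  exact ⟨tendsto_gq_atTop hd hnrm hmono hzero, tendsto_gq_nhdsGT_zero hd hnrm hmono hnonneg⟩

end
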